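/- arXiv:1301.1398 — 2 statements merged into one kernel-verified Lean document; each statement's English description precedes it below -/
import Mathlib

section
/- Let (g, ∇) be a Lie algebra and δ: g → Λ²g a coskew linear map, with ∂ and d the induced boundary and coboundary operators on Λ^* g. Then d∂ + ∂d = 0 on Λ^p g for p = 1 and p = 2 if and only if δ satisfies the compatibility condition δ[X,Y] = σ(X)(δY) - σ(Y)(δX) for all X, Y ∈ g and the involutivity ∇δ = 0: g → g. -/
open TensorProduct

/-- The wedge product `X₁ ∧ ⋯ ∧ X_p` of a list of vectors. -/
noncomputable def wedgeList (g : Type) [AddCommGroup g] [Module ℚ g] (l : List g) :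
    ExteriorAlgebra ℚ g := (l.map (ExteriorAlgebra.ι ℚ)).prod

/-- The map `g ⊗ g → Λ* g`, `X ⊗ Y ↦ ι X * ι Y`. -/
noncomputable def toExt (g : Type) [AddCommGroup g] [Module ℚ g] :
    g ⊗[ℚ] g →ₗ[ℚ] ExteriorAlgebra ℚ g :=
  TensorProduct.lift ((LinearMap.mul ℚ (ExteriorAlgebra ℚ g)).compl₁₂
    (ExteriorAlgebra.ι ℚ) (ExteriorAlgebra.ι ℚ))

/-- The diagonal adjoint action `σ(Y)` on `g ⊗ g` (hence on `Λ²g ⊂ g ⊗ g`). -/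
noncomputable def sig2 (g : Type) [LieRing g] [LieAlgebra ℚ g] (Y : g) :
    g ⊗[ℚ] g →ₗ[ℚ] g ⊗[ℚ] g :=
  TensorProduct.map (LieAlgebra.ad ℚ g Y) LinearMap.id +
    TensorProduct.map LinearMap.id (LieAlgebra.ad ℚ g Y)

/-- The bracket map `∇ : g ⊗ g → g`, `X ⊗ Y ↦ ⁅X, Y⁆`. -/
noncomputable def brm (g : Type) [LieRing g] [LieAlgebra ℚ g] :
    g ⊗[ℚ] g →ₗ[ℚ] g :=
  TensorProduct.lift (LieAlgebra.ad ℚ g : g →ₗ[ℚ] Module.End ℚ g)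

/-! In degrees 1 and 2 the anticommutator `d∂ + ∂d` can be computed by hand: on `X` it is
`∇(δX)`, and on `X ∧ Y` it is the image in `Λ²g` of the compatibility defect
`δ[X,Y] - σ(X)(δY) + σ(Y)(δX)` plus `∇(δX) ∧ Y - ∇(δY) ∧ X`. So vanishing in degree 1 is
involutivity, and then vanishing in degree 2 says that the defect dies in `Λ²g`. The defect is
coskew, and composing `g ⊗ g → Λ²g` with `Λ²g → g ⊗ g`, `X ∧ Y ↦ X ⊗ Y - Y ⊗ X` gives
`t ↦ t - tᵀ`, which is `2 • t` on coskew tensors; as `2` is invertible in `ℚ`, the defect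
vanishes. -/

open ExteriorAlgebra

section ToTensor

variable (R M : Type*) [CommRing R] [AddCommGroup M] [Module R M]

noncomputable def tmulAntisymm : M [⋀^Fin 2]→ₗ[R] M ⊗[R] M where
  toFun v := v 0 ⊗ₜ v 1 - v 1 ⊗ₜ v 0
  map_update_add' v i x y := by
    fin_cases i <;> simp [add_tmul, tmul_add, add_sub_add_comm]
  map_update_smul' v i c x := by
    fin_cases i <;> simp [smul_tmul', tmul_smul, smul_sub]
  map_eq_zero_of_eq' v i j hv hij := by
    fin_cases i <;> fin_cases j <;> simp_all

noncomputable def ExteriorAlgebra.toTensorSq : ExteriorAlgebra R M →ₗ[R] M ⊗[R] M :=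
  liftAlternating (Pi.single (M := fun i => M [⋀^Fin i]→ₗ[R] M ⊗[R] M) 2 (tmulAntisymm R M))

variable {R M}

theorem ExteriorAlgebra.toTensorSq_ι_mul_ι (x y : M) :
    toTensorSq R M (ι R x * ι R y) = x ⊗ₜ y - y ⊗ₜ x := by
  have h : ι R x * ι R y = ιMulti R 2 ![x, y] := by
    simp [ιMulti_apply]
  rw [h, toTensorSq, liftAlternating_apply_ιMulti, Pi.single_eq_same]
  rfl

end ToTensor

section Rational

variable {g : Type} [AddCommGroup g] [Module ℚ g]

theorem toExt_tmul (x y : g) : toExt g (x ⊗ₜ y) = ι ℚ x * ι ℚ y := by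
  simp [toExt]

theorem toTensorSq_toExt (t : g ⊗[ℚ] g) :
    toTensorSq ℚ g (toExt g t) = t - TensorProduct.comm ℚ g g t := by
  induction t using TensorProduct.induction_on with
  | zero => simp
  | tmul x y => rw [toExt_tmul, toTensorSq_ι_mul_ι]; rfl
  | add x y hx hy => rw [map_add, map_add, hx, hy, map_add]; abel

theorem eq_zero_of_comm_eq_neg_of_toExt_eq_zero {t : g ⊗[ℚ] g}
    (hskew : TensorProduct.comm ℚ g g t = -t) (ht : toExt g t = 0) : t = 0 := by
  have h : (2 : ℚ) • t = 0 := by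
    rw [two_smul, ← sub_neg_eq_add, ← hskew, ← toTensorSq_toExt, ht, map_zero]
  exact (smul_eq_zero.mp h).resolve_left two_ne_zero

end Rational

section LieBialgebra

variable {g : Type} [LieRing g] [LieAlgebra ℚ g]

def IsCEBoundary (pa : ExteriorAlgebra ℚ g →ₗ[ℚ] ExteriorAlgebra ℚ g) : Prop :=
  ∀ (p : ℕ) (X : Fin p → g),
    pa (wedgeList g (List.ofFn X)) =
      ∑ i : Fin p, ∑ j : Fin p, if (i : ℕ) < (j : ℕ) then
        ((-1 : ℚ) ^ ((i : ℕ) + (j : ℕ))) •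
          (ι ℚ ⁅X i, X j⁆ * wedgeList g (((List.ofFn X).eraseIdx (j : ℕ)).eraseIdx (i : ℕ)))
      else 0

def IsCoboundaryOf (δ : g →ₗ[ℚ] g ⊗[ℚ] g) (d : ExteriorAlgebra ℚ g →ₗ[ℚ] ExteriorAlgebra ℚ g) :
    Prop :=
  ∀ (p : ℕ) (X : Fin p → g),
    d (wedgeList g (List.ofFn X)) =
      ∑ i : Fin p, ((-1 : ℚ) ^ ((i : ℕ) + 1)) •
        (toExt g (δ (X i)) * wedgeList g ((List.ofFn X).eraseIdx (i : ℕ)))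

theorem brm_tmul (x y : g) : brm g (x ⊗ₜ y) = ⁅x, y⁆ := by
  simp [brm]

theorem sig2_tmul (z x y : g) : sig2 g z (x ⊗ₜ y) = ⁅z, x⁆ ⊗ₜ y + x ⊗ₜ ⁅z, y⁆ := by
  simp [sig2]

theorem comm_sig2 (z : g) (t : g ⊗[ℚ] g) :
    TensorProduct.comm ℚ g g (sig2 g z t) = sig2 g z (TensorProduct.comm ℚ g g t) := by
  induction t using TensorProduct.induction_on with
  | zero => simp
  | tmul x y => simp only [sig2_tmul, map_add, comm_tmul]; abel
  | add x y hx hy => simp only [map_add, hx, hy]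

noncomputable def compatibilityDefect (δ : g →ₗ[ℚ] g ⊗[ℚ] g) (x y : g) : g ⊗[ℚ] g :=
  δ ⁅x, y⁆ - (sig2 g x (δ y) - sig2 g y (δ x))

namespace IsCEBoundary

variable {pa : ExteriorAlgebra ℚ g →ₗ[ℚ] ExteriorAlgebra ℚ g}

theorem apply_ι (hpa : IsCEBoundary pa) (x : g) : pa (ι ℚ x) = 0 := by
  simpa [wedgeList] using hpa 1 ![x]

theorem apply_ι_mul_ι (hpa : IsCEBoundary pa) (x y : g) : pa (ι ℚ x * ι ℚ y) = -ι ℚ ⁅x, y⁆ := by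
  simpa [wedgeList, Fin.sum_univ_succ] using hpa 2 ![x, y]

theorem apply_ι_mul_ι_mul_ι (hpa : IsCEBoundary pa) (x y z : g) :
    pa (ι ℚ x * ι ℚ y * ι ℚ z) =
      -(ι ℚ ⁅x, y⁆ * ι ℚ z) + ι ℚ ⁅x, z⁆ * ι ℚ y - ι ℚ ⁅y, z⁆ * ι ℚ x := by
  simpa [wedgeList, Fin.sum_univ_succ, mul_assoc, sub_eq_add_neg, pow_succ] using hpa 3 ![x, y, z]

theorem apply_toExt (hpa : IsCEBoundary pa) (t : g ⊗[ℚ] g) :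
    pa (toExt g t) = -ι ℚ (brm g t) := by
  induction t using TensorProduct.induction_on with
  | zero => simp
  | tmul x y => rw [toExt_tmul, brm_tmul, hpa.apply_ι_mul_ι]
  | add x y hx hy => simp only [map_add, hx, hy, neg_add]

theorem apply_toExt_mul_ι (hpa : IsCEBoundary pa) (t : g ⊗[ℚ] g) (z : g) :
    pa (toExt g t * ι ℚ z) = -(ι ℚ (brm g t) * ι ℚ z) - toExt g (sig2 g z t) := by
  induction t using TensorProduct.induction_on with
  | zero => simp
  | tmul x y =>
    have hxz : ι ℚ x * ι ℚ ⁅z, y⁆ = -(ι ℚ ⁅z, y⁆ * ι ℚ x) :=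
      eq_neg_of_add_eq_zero_left (ι_add_mul_swap x _)
    rw [toExt_tmul, hpa.apply_ι_mul_ι_mul_ι, brm_tmul, sig2_tmul, map_add, toExt_tmul,
      toExt_tmul, hxz, ← lie_skew z x, ← lie_skew z y]
    simp only [map_neg, neg_mul]
    abel
  | add t u ht hu => simp only [map_add, add_mul, ht, hu]; abel

end IsCEBoundary

namespace IsCoboundaryOf

variable {δ : g →ₗ[ℚ] g ⊗[ℚ] g} {d : ExteriorAlgebra ℚ g →ₗ[ℚ] ExteriorAlgebra ℚ g}

theorem apply_ι (hd : IsCoboundaryOf δ d) (x : g) : d (ι ℚ x) = -toExt g (δ x) := by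
  simpa [wedgeList] using hd 1 ![x]

theorem apply_ι_mul_ι (hd : IsCoboundaryOf δ d) (x y : g) :
    d (ι ℚ x * ι ℚ y) = -(toExt g (δ x) * ι ℚ y) + toExt g (δ y) * ι ℚ x := by
  simpa [wedgeList, Fin.sum_univ_succ] using hd 2 ![x, y]

end IsCoboundaryOf

variable {δ : g →ₗ[ℚ] g ⊗[ℚ] g} {pa d : ExteriorAlgebra ℚ g →ₗ[ℚ] ExteriorAlgebra ℚ g}

theorem d_pa_add_pa_d_ι (hpa : IsCEBoundary pa) (hd : IsCoboundaryOf δ d) (x : g) :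
    d (pa (ι ℚ x)) + pa (d (ι ℚ x)) = ι ℚ (brm g (δ x)) := by
  rw [hpa.apply_ι, map_zero, zero_add, hd.apply_ι, map_neg, hpa.apply_toExt, neg_neg]

theorem d_pa_add_pa_d_ι_mul_ι (hpa : IsCEBoundary pa) (hd : IsCoboundaryOf δ d) (x y : g) :
    d (pa (ι ℚ x * ι ℚ y)) + pa (d (ι ℚ x * ι ℚ y)) =
      toExt g (compatibilityDefect δ x y) +
        (ι ℚ (brm g (δ x)) * ι ℚ y - ι ℚ (brm g (δ y)) * ι ℚ x) := by
  rw [hpa.apply_ι_mul_ι, map_neg, hd.apply_ι, hd.apply_ι_mul_ι, map_add, map_neg,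
    hpa.apply_toExt_mul_ι, hpa.apply_toExt_mul_ι, compatibilityDefect, map_sub, map_sub]
  abel

theorem comm_compatibilityDefect (hcoskew : ∀ x : g, TensorProduct.comm ℚ g g (δ x) = -δ x)
    (x y : g) :
    TensorProduct.comm ℚ g g (compatibilityDefect δ x y) = -compatibilityDefect δ x y := by
  simp only [compatibilityDefect, map_sub, comm_sig2, hcoskew, map_neg, neg_sub]
  abel

end LieBialgebra

/-- for a Lie algebra `g` and a coskew `δ : g → Λ²g ⊂ g ⊗ g`,
`d∂ + ∂d = 0` on `Λ^p g` for `p = 1, 2` iff `δ` satisfies the compatibility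
condition `δ[X,Y] = σ(X)(δY) - σ(Y)(δX)` and the involutivity `∇δ = 0`. -/
theorem stmt3 (g : Type) [LieRing g] [LieAlgebra ℚ g]
    (δ : g →ₗ[ℚ] g ⊗[ℚ] g)
    (hcoskew : ∀ X : g, TensorProduct.comm ℚ g g (δ X) = - δ X)
    (pa d : ExteriorAlgebra ℚ g →ₗ[ℚ] ExteriorAlgebra ℚ g)
    (hpa : ∀ (p : ℕ) (X : Fin p → g),
      pa (wedgeList g (List.ofFn X)) =
        ∑ i : Fin p, ∑ j : Fin p, if (i : ℕ) < (j : ℕ) then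
          ((-1 : ℚ) ^ ((i : ℕ) + (j : ℕ))) •
            (ExteriorAlgebra.ι ℚ ⁅X i, X j⁆ *
              wedgeList g (((List.ofFn X).eraseIdx (j : ℕ)).eraseIdx (i : ℕ)))
        else 0)
    (hd : ∀ (p : ℕ) (X : Fin p → g),
      d (wedgeList g (List.ofFn X)) =
        ∑ i : Fin p, ((-1 : ℚ) ^ ((i : ℕ) + 1)) •
          (toExt g (δ (X i)) * wedgeList g ((List.ofFn X).eraseIdx (i : ℕ)))) :
    ((∀ X : g, d (pa (ExteriorAlgebra.ι ℚ X)) + pa (d (ExteriorAlgebra.ι ℚ X)) = 0) ∧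
     (∀ X Y : g,
        d (pa (ExteriorAlgebra.ι ℚ X * ExteriorAlgebra.ι ℚ Y)) +
          pa (d (ExteriorAlgebra.ι ℚ X * ExteriorAlgebra.ι ℚ Y)) = 0)) ↔
    ((∀ X Y : g, δ ⁅X, Y⁆ = sig2 g X (δ Y) - sig2 g Y (δ X)) ∧
     brm g ∘ₗ δ = 0) := by
  constructor
  · rintro ⟨hdeg1, hdeg2⟩
    have hinv : ∀ x, brm g (δ x) = 0 := fun x =>
      (ι_eq_zero_iff _).mp ((d_pa_add_pa_d_ι hpa hd x).symm.trans (hdeg1 x))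
    have hdefect : ∀ x y, compatibilityDefect δ x y = 0 := fun x y =>
      eq_zero_of_comm_eq_neg_of_toExt_eq_zero (comm_compatibilityDefect hcoskew x y) <| by
        simpa [hinv] using (d_pa_add_pa_d_ι_mul_ι hpa hd x y).symm.trans (hdeg2 x y)
    exact ⟨fun x y => sub_eq_zero.mp (hdefect x y), LinearMap.ext hinv⟩
  · rintro ⟨hcompat, hinvolutive⟩
    have hinv : ∀ x, brm g (δ x) = 0 := LinearMap.congr_fun hinvolutive
    have hdefect : ∀ x y, compatibilityDefect δ x y = 0 := fun x y =>
      sub_eq_zero.mpr (hcompat x y)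
    refine ⟨fun x => by rw [d_pa_add_pa_d_ι hpa hd, hinv, map_zero], fun x y => ?_⟩
    rw [d_pa_add_pa_d_ι_mul_ι hpa hd, hdefect, hinv, hinv]
    simp
end

section
/- Let g be a Lie algebra, A ∈ Λ²g, and E_A: Λ^*g → Λ^{*+1+1}g the multiplication u ↦ A∧u. Then (∂E_A - E_A∂ + E_{∇A})(X_1∧⋯∧X_p) = Σ_{i=1}^p (-1)^i σ(X_i)(A)∧X_1∧⋯(omit i)⋯∧X_p, where ∇A ∈ g is the image of A under the bracket and σ(X_i) is the adjoint action on Λ²g. -/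
open TensorProduct

/-! Both sides are additive in `A`, so it suffices to take `A = a ∧ b`. Expanding
`∂(a ∧ b ∧ X₁ ∧ ⋯ ∧ X_p)` over pairs of factors, the pair `(a, b)` gives `-[a, b] ∧ X`, which
`E_{∇A}` cancels; the pairs inside the tail give `a ∧ b ∧ ∂X` because `a ∧ b` is even, which
`E_A ∂` cancels; and the mixed pairs `(a, X_k)`, `(b, X_k)` assemble, by skew-symmetry of the
bracket, into `(-1)^k σ(X_k)(a ∧ b) ∧ X₁ ∧ ⋯ ô_k ⋯ ∧ X_p`. -/

open ExteriorAlgebra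

section Wedge

variable {g : Type} [AddCommGroup g] [Module ℚ g]

lemma wedgeList_cons (x : g) (l : List g) :
    wedgeList g (x :: l) = ι ℚ x * wedgeList g l := by
  simp [wedgeList]

lemma ι_mul_ι_anticomm (x y : g) : ι ℚ x * ι ℚ y = -(ι ℚ y * ι ℚ x) :=
  eq_neg_of_add_eq_zero_left (ι_add_mul_swap x y)

lemma ι_mul_ι_mul_anticomm (x y : g) (u : ExteriorAlgebra ℚ g) :
    ι ℚ x * (ι ℚ y * u) = -(ι ℚ y * (ι ℚ x * u)) := by
  rw [← mul_assoc, ι_mul_ι_anticomm, neg_mul, mul_assoc]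

lemma commute_ι_mul_ι (a b c : g) : Commute (ι ℚ a * ι ℚ b) (ι ℚ c) := by
  unfold Commute SemiconjBy
  rw [mul_assoc, ι_mul_ι_anticomm b c, mul_neg, ← mul_assoc, ι_mul_ι_anticomm a c, neg_mul,
    neg_neg, mul_assoc]

end Wedge

variable {g : Type} [LieRing g] [LieAlgebra ℚ g]

lemma boundary_ι_mul_ι_mul_wedgeList
    (pa : ExteriorAlgebra ℚ g →ₗ[ℚ] ExteriorAlgebra ℚ g)
    (hpa : ∀ (p : ℕ) (X : Fin p → g),
      pa (wedgeList g (List.ofFn X)) =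
        ∑ i : Fin p, ∑ j : Fin p, if (i : ℕ) < (j : ℕ) then
          ((-1 : ℚ) ^ ((i : ℕ) + (j : ℕ))) •
            (ι ℚ ⁅X i, X j⁆ * wedgeList g (((List.ofFn X).eraseIdx (j : ℕ)).eraseIdx (i : ℕ)))
        else 0)
    (a b : g) {p : ℕ} (X : Fin p → g) :
    pa (ι ℚ a * ι ℚ b * wedgeList g (List.ofFn X)) =
      -(ι ℚ ⁅a, b⁆ * wedgeList g (List.ofFn X))
        + ∑ k : Fin p, ((-1 : ℚ) ^ (k : ℕ)) •
            (ι ℚ ⁅a, X k⁆ * wedgeList g (b :: (List.ofFn X).eraseIdx k))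
        - ∑ k : Fin p, ((-1 : ℚ) ^ (k : ℕ)) •
            (ι ℚ ⁅b, X k⁆ * wedgeList g (a :: (List.ofFn X).eraseIdx k))
        + ι ℚ a * ι ℚ b * pa (wedgeList g (List.ofFn X)) := by
  have hofFn : List.ofFn (Fin.cons a (Fin.cons b X) : Fin (p + 2) → g) = a :: b :: List.ofFn X := by
    simp [List.ofFn_succ]
  have htail : (∑ i : Fin p, ∑ j : Fin p, if (i : ℕ) < j then
        ((-1 : ℚ) ^ ((i : ℕ) + 1 + 1 + ((j : ℕ) + 1 + 1))) •
          (ι ℚ ⁅X i, X j⁆ * wedgeList g (a :: b :: ((List.ofFn X).eraseIdx j).eraseIdx i))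
        else 0) = ι ℚ a * ι ℚ b * pa (wedgeList g (List.ofFn X)) := by
    simp only [hpa, Finset.mul_sum, mul_ite, mul_zero]
    refine Finset.sum_congr rfl fun i _ => Finset.sum_congr rfl fun j _ => ?_
    refine if_congr Iff.rfl ?_ rfl
    rw [wedgeList_cons, wedgeList_cons, mul_smul_comm, ← mul_assoc (ι ℚ a),
      (commute_ι_mul_ι a b _).left_comm]
    congr 1
    ring
  rw [mul_assoc, ← wedgeList_cons, ← wedgeList_cons, ← hofFn, hpa]
  simp only [hofFn, Fin.sum_univ_succ, Fin.cons_succ, Fin.cons_zero, Fin.val_succ, Fin.val_zero,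
    List.eraseIdx_cons_succ, List.eraseIdx_cons_zero, Nat.succ_lt_succ_iff,
    Nat.zero_lt_succ, Nat.not_lt_zero, if_true, if_false, zero_add, add_zero,
    pow_one, neg_one_smul]
  have hsign_a (k : ℕ) : (-1 : ℚ) ^ (k + 1 + 1) = (-1) ^ k := by ring
  have hsign_b (k : ℕ) : (-1 : ℚ) ^ (1 + (k + 1 + 1)) = -(-1) ^ k := by ring
  rw [htail]
  simp only [hsign_a, hsign_b, neg_smul, Finset.sum_neg_distrib]
  abel

lemma adjoint_ι_mul_ι
    (σE : g → ExteriorAlgebra ℚ g →ₗ[ℚ] ExteriorAlgebra ℚ g)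
    (hσ : ∀ (Y : g) (p : ℕ) (X : Fin p → g),
      σE Y (wedgeList g (List.ofFn X)) =
        ∑ i : Fin p, wedgeList g ((List.ofFn X).set (i : ℕ) ⁅Y, X i⁆))
    (Y a b : g) :
    σE Y (ι ℚ a * ι ℚ b) = ι ℚ ⁅Y, a⁆ * ι ℚ b + ι ℚ a * ι ℚ ⁅Y, b⁆ := by
  have hab : ι ℚ a * ι ℚ b = wedgeList g (List.ofFn ![a, b]) := by
    simp [wedgeList]
  rw [hab, hσ]
  simp [Fin.sum_univ_two, wedgeList]

lemma boundary_leftMul_ι_mul_ι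
    (pa : ExteriorAlgebra ℚ g →ₗ[ℚ] ExteriorAlgebra ℚ g)
    (hpa : ∀ (p : ℕ) (X : Fin p → g),
      pa (wedgeList g (List.ofFn X)) =
        ∑ i : Fin p, ∑ j : Fin p, if (i : ℕ) < (j : ℕ) then
          ((-1 : ℚ) ^ ((i : ℕ) + (j : ℕ))) •
            (ι ℚ ⁅X i, X j⁆ * wedgeList g (((List.ofFn X).eraseIdx (j : ℕ)).eraseIdx (i : ℕ)))
        else 0)
    (σE : g → ExteriorAlgebra ℚ g →ₗ[ℚ] ExteriorAlgebra ℚ g)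
    (hσ : ∀ (Y : g) (p : ℕ) (X : Fin p → g),
      σE Y (wedgeList g (List.ofFn X)) =
        ∑ i : Fin p, wedgeList g ((List.ofFn X).set (i : ℕ) ⁅Y, X i⁆))
    (nab : ExteriorAlgebra ℚ g →ₗ[ℚ] ExteriorAlgebra ℚ g)
    (hnab : ∀ a b : g, nab (ι ℚ a * ι ℚ b) = ι ℚ ⁅a, b⁆)
    (a b : g) {p : ℕ} (X : Fin p → g) :
    pa (ι ℚ a * ι ℚ b * wedgeList g (List.ofFn X))
      - ι ℚ a * ι ℚ b * pa (wedgeList g (List.ofFn X))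
      + nab (ι ℚ a * ι ℚ b) * wedgeList g (List.ofFn X) =
    ∑ i : Fin p, ((-1 : ℚ) ^ ((i : ℕ) + 1)) •
      (σE (X i) (ι ℚ a * ι ℚ b) * wedgeList g ((List.ofFn X).eraseIdx (i : ℕ))) := by
  have hterm (i : Fin p) :
      ((-1 : ℚ) ^ ((i : ℕ) + 1)) •
        (σE (X i) (ι ℚ a * ι ℚ b) * wedgeList g ((List.ofFn X).eraseIdx (i : ℕ))) =
      ((-1 : ℚ) ^ (i : ℕ)) • (ι ℚ ⁅a, X i⁆ * wedgeList g (b :: (List.ofFn X).eraseIdx i))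
        - ((-1 : ℚ) ^ (i : ℕ)) • (ι ℚ ⁅b, X i⁆ * wedgeList g (a :: (List.ofFn X).eraseIdx i)) := by
    rw [adjoint_ι_mul_ι σE hσ, wedgeList_cons, wedgeList_cons, ← lie_skew (X i) a,
      ← lie_skew (X i) b, map_neg, map_neg]
    simp only [add_mul, neg_mul, mul_neg, mul_assoc]
    rw [ι_mul_ι_mul_anticomm a, pow_succ]
    module
  rw [boundary_ι_mul_ι_mul_wedgeList pa hpa, hnab, Finset.sum_congr rfl fun i _ => hterm i,
    Finset.sum_sub_distrib]
  abel

/-- for a Lie algebra `g` and `A ∈ Λ²g`, with `E_A` left multiplication by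
`A`, one has `(∂E_A - E_A∂ + E_{∇A})(X₁∧⋯∧X_p) = Σ_i (-1)^i σ(X_i)(A)∧X₁∧⋯ô_i⋯∧X_p`. -/
theorem stmt11 (g : Type) [LieRing g] [LieAlgebra ℚ g]
    (pa : ExteriorAlgebra ℚ g →ₗ[ℚ] ExteriorAlgebra ℚ g)
    (hpa : ∀ (p : ℕ) (X : Fin p → g),
      pa (wedgeList g (List.ofFn X)) =
        ∑ i : Fin p, ∑ j : Fin p, if (i : ℕ) < (j : ℕ) then
          ((-1 : ℚ) ^ ((i : ℕ) + (j : ℕ))) •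
            (ExteriorAlgebra.ι ℚ ⁅X i, X j⁆ *
              wedgeList g (((List.ofFn X).eraseIdx (j : ℕ)).eraseIdx (i : ℕ)))
        else 0)
    (σE : g → ExteriorAlgebra ℚ g →ₗ[ℚ] ExteriorAlgebra ℚ g)
    (hσ : ∀ (Y : g) (p : ℕ) (X : Fin p → g),
      σE Y (wedgeList g (List.ofFn X)) =
        ∑ i : Fin p, wedgeList g ((List.ofFn X).set (i : ℕ) ⁅Y, X i⁆))
    (nab : ExteriorAlgebra ℚ g →ₗ[ℚ] ExteriorAlgebra ℚ g)
    (hnab : ∀ a b : g,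
      nab (ExteriorAlgebra.ι ℚ a * ExteriorAlgebra.ι ℚ b) = ExteriorAlgebra.ι ℚ ⁅a, b⁆)
    (A : ExteriorAlgebra ℚ g)
    (hA : A ∈ (LinearMap.range (ExteriorAlgebra.ι ℚ (M := g)) ^ 2 :
      Submodule ℚ (ExteriorAlgebra ℚ g))) :
    ∀ (p : ℕ) (X : Fin p → g),
      pa (A * wedgeList g (List.ofFn X)) - A * pa (wedgeList g (List.ofFn X)) +
        nab A * wedgeList g (List.ofFn X) =
      ∑ i : Fin p, ((-1 : ℚ) ^ ((i : ℕ) + 1)) •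
        (σE (X i) A * wedgeList g ((List.ofFn X).eraseIdx (i : ℕ))) := by
  rw [pow_two] at hA
  intro p X
  refine Submodule.mul_induction_on hA ?_ ?_
  · rintro _ ⟨x, rfl⟩ _ ⟨y, rfl⟩
    exact boundary_leftMul_ι_mul_ι pa hpa σE hσ nab hnab x y X
  · intro u v hu hv
    simp only [add_mul, map_add, smul_add, Finset.sum_add_distrib, ← hu, ← hv]
    abel
end
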